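/- arXiv:2107.01909 — 5 statements merged into one kernel-verified Lean document; each statement's English description precedes it below -/
import Mathlib

section
/- Let F be a field of characteristic zero and m ∈ ℕ. Model the differential polynomial ring F{A} in one differential indeterminate A with m commuting derivations as R := MvPolynomial σ F where σ := (Fin m →₀ ℕ), the variable X θ representing the derivative θA. Suppose δ : Fin m → Derivation F R R is a family of derivations satisfying δ i (X θ) = X (θ + Finsupp.single i 1) for all i and θ. For a word w : List (Fin m), let δ_w denote the composite of the derivations δ i for i in w (applied in order). Then for every d ≥ 1, every word w : List (Fin m), and every variable index τ : σ, the partial derivative (pderiv τ) (δ_w ((X 0)^d)) belongs to the differential ideal generated by (X 0)^{d-1}, i.e. to the ideal of R generated by the set {δ_{w'} ((X 0)^{d-1}) : w' a word over Fin m}. -/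
/-!
Each `δ i` shifts the variable `X θ` to `X (θ + eᵢ)`, so the commutator `⁅∂_τ, δ i⁆` is again a
derivation and is determined on the variables: it is `∂_{τ - eᵢ}` when `τ i ≠ 0` and `0` otherwise.
Hence `∂_τ (δ i q) = δ i (∂_τ q) + ∂_{τ - eᵢ} q`, and by induction on the word every partial
derivative of `δ_w q` lies in any differential ideal containing all partial derivatives of `q`.
For `q = A^d` these are `d A^(d-1) ∂_τ A ∈ [A^(d-1)]`.
-/

open MvPolynomial

noncomputable def applyWord {F : Type*} [CommRing F] {m : ℕ}
    (δ : Fin m → Derivation F (MvPolynomial (Fin m →₀ ℕ) F) (MvPolynomial (Fin m →₀ ℕ) F))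
    (w : List (Fin m)) (p : MvPolynomial (Fin m →₀ ℕ) F) : MvPolynomial (Fin m →₀ ℕ) F :=
  w.foldr (fun i q => δ i q) p

section

variable {F : Type*} [CommRing F] {m : ℕ}
  (δ : Fin m → Derivation F (MvPolynomial (Fin m →₀ ℕ) F) (MvPolynomial (Fin m →₀ ℕ) F))

@[simp]
lemma applyWord_cons (i : Fin m) (w : List (Fin m)) (p : MvPolynomial (Fin m →₀ ℕ) F) :
    applyWord δ (i :: w) p = δ i (applyWord δ w p) := rfl

noncomputable def differentialIdeal (p : MvPolynomial (Fin m →₀ ℕ) F) :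
    Ideal (MvPolynomial (Fin m →₀ ℕ) F) :=
  Ideal.span {q | ∃ w : List (Fin m), q = applyWord δ w p}

lemma mem_differentialIdeal_self (p : MvPolynomial (Fin m →₀ ℕ) F) :
    p ∈ differentialIdeal δ p :=
  Ideal.subset_span ⟨[], rfl⟩

lemma derivation_mem_differentialIdeal {p q : MvPolynomial (Fin m →₀ ℕ) F} (i : Fin m)
    (hq : q ∈ differentialIdeal δ p) : δ i q ∈ differentialIdeal δ p := by
  induction hq using Submodule.span_induction with
  | mem x hx =>
    obtain ⟨w, rfl⟩ := hx
    exact Ideal.subset_span ⟨i :: w, rfl⟩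
  | zero => simp
  | add x y _ _ hx hy => simpa using Ideal.add_mem _ hx hy
  | smul a x hx hδx =>
    rw [smul_eq_mul, Derivation.leibniz, smul_eq_mul, smul_eq_mul]
    exact Ideal.add_mem _ (Ideal.mul_mem_left _ _ hδx) (Ideal.mul_mem_right _ _ hx)

variable (hδ : ∀ (i : Fin m) (θ : Fin m →₀ ℕ), δ i (X θ) = X (θ + Finsupp.single i 1))
include hδ

lemma commutator_pderiv_derivation (τ : Fin m →₀ ℕ) (i : Fin m) :
    ⁅(pderiv τ : Derivation F (MvPolynomial (Fin m →₀ ℕ) F) _), δ i⁆ =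
      if τ i = 0 then 0 else pderiv (τ - Finsupp.single i 1) := by
  refine derivation_ext fun θ => ?_
  have hconst : δ i (pderiv τ (X θ)) = 0 := by
    rw [pderiv_X, Pi.single_apply]; split_ifs <;> simp
  rw [Derivation.commutator_apply, hconst, sub_zero, hδ]
  split_ifs with hτ
  · have hne : θ + Finsupp.single i 1 ≠ τ := fun h => by simp [← h] at hτ
    simp [pderiv_X, hne]
  · have hshift : θ = τ - Finsupp.single i 1 ↔ θ + Finsupp.single i 1 = τ :=
      eq_tsub_iff_add_eq_of_le (Finsupp.single_le_iff.mpr (Nat.one_le_iff_ne_zero.mpr hτ))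
    simp only [pderiv_X, Pi.single_apply, hshift]

lemma pderiv_derivation_apply (τ : Fin m →₀ ℕ) (i : Fin m) (p : MvPolynomial (Fin m →₀ ℕ) F) :
    pderiv τ (δ i p) = δ i (pderiv τ p) +
      if τ i = 0 then 0 else pderiv (τ - Finsupp.single i 1) p := by
  have h := congrArg (· p) (commutator_pderiv_derivation δ hδ τ i)
  rw [Derivation.commutator_apply] at h
  rw [← sub_eq_iff_eq_add', h]
  split_ifs <;> rfl

lemma pderiv_applyWord_mem_differentialIdeal {p q : MvPolynomial (Fin m →₀ ℕ) F}
    (hq : ∀ τ, pderiv τ q ∈ differentialIdeal δ p) (w : List (Fin m)) (τ : Fin m →₀ ℕ) :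
    pderiv τ (applyWord δ w q) ∈ differentialIdeal δ p := by
  induction w generalizing τ with
  | nil => exact hq τ
  | cons i w ih =>
    rw [applyWord_cons, pderiv_derivation_apply δ hδ]
    refine Ideal.add_mem _ (derivation_mem_differentialIdeal δ i (ih τ)) ?_
    split_ifs
    · exact zero_mem _
    · exact ih _

end

theorem pderiv_applyWord_pow_mem_differential_ideal_general
    (F : Type*) [Field F] (m : ℕ)
    (δ : Fin m → Derivation F (MvPolynomial (Fin m →₀ ℕ) F) (MvPolynomial (Fin m →₀ ℕ) F))
    (hδ : ∀ (i : Fin m) (θ : Fin m →₀ ℕ),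
      δ i (X θ) = X (θ + Finsupp.single i 1))
    (d : ℕ) (w : List (Fin m)) (τ : Fin m →₀ ℕ) :
    (pderiv τ) (applyWord δ w ((X 0) ^ d)) ∈
      Ideal.span { q : MvPolynomial (Fin m →₀ ℕ) F |
        ∃ w' : List (Fin m), q = applyWord δ w' ((X 0) ^ (d - 1)) } := by
  refine pderiv_applyWord_mem_differentialIdeal δ hδ (fun τ => ?_) w τ
  rw [Derivation.leibniz_pow, smul_eq_mul]
  exact nsmul_mem (Ideal.mul_mem_right _ _ (mem_differentialIdeal_self δ _)) d

/-- Lemma 3(ii)(a): in the differential polynomial ring `F{A}` (modelled as the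
multivariate polynomial ring with variables indexed by multi-indices `θ : Fin m →₀ ℕ`,
the variable `X θ` representing `θA`), for every derivative operator `θ` (a word `w`),
every variable `τA` and every `d ≥ 1`, the partial derivative `∂_{τA} θ(A^d)` belongs
to the differential ideal generated by `A^(d-1)`. -/
theorem pderiv_applyWord_pow_mem_differential_ideal
    (F : Type*) [Field F] [CharZero F] (m : ℕ)
    (δ : Fin m → Derivation F (MvPolynomial (Fin m →₀ ℕ) F) (MvPolynomial (Fin m →₀ ℕ) F))
    (hδ : ∀ (i : Fin m) (θ : Fin m →₀ ℕ),
      δ i (X θ) = X (θ + Finsupp.single i 1))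
    (d : ℕ) (hd : 1 ≤ d) (w : List (Fin m)) (τ : Fin m →₀ ℕ) :
    (pderiv τ) (applyWord δ w ((X 0) ^ d)) ∈
      Ideal.span { q : MvPolynomial (Fin m →₀ ℕ) F |
        ∃ w' : List (Fin m), q = applyWord δ w' ((X 0) ^ (d - 1)) } :=
  pderiv_applyWord_pow_mem_differential_ideal_general F m δ hδ d w τ
end

section
/- Let K be a field of characteristic zero. Work in the bivariate polynomial ring K[x,y] (MvPolynomial (Fin 2) K). Let a₁, …, a_{r₁} ∈ K be pairwise distinct, b₁, …, b_{r₂} ∈ K pairwise distinct, and let d_{1,k} ≥ 1 (1 ≤ k ≤ r₁) and d_{2,k} ≥ 1 (1 ≤ k ≤ r₂) be integers. Suppose R ∈ K[x,y] satisfies: (1) deg_x R < Σ_{k=1}^{r₁} d_{1,k} and deg_y R < Σ_{k=1}^{r₂} d_{2,k}; and (2) for every pair (k₁,k₂), R belongs to the ideal of K[x,y] generated by (x − a_{k₁})^{d_{1,k₁}} and (y − b_{k₂})^{d_{2,k₂}}. Then R = 0. -/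
/-!
View `R` as a polynomial in `x` over `K[y]`. Modulo `(y - b l)^(d₂ l)` it is divisible by every
`(x - a k)^(d₁ k)`; these factors are pairwise coprime since `a i - a j` is a unit, so their
product, monic of degree `∑ d₁`, divides it, and the bound on `deg_x R` forces it to vanish.
Thus every `x`-coefficient of `R` is divisible by all `(y - b l)^(d₂ l)`, and the same argument
in `y` (now over `K`) shows that these coefficients are zero.
-/

theorem Function.Injective.pairwise_isUnit_sub {K ι : Type*} [DivisionRing K] {c : ι → K}
    (hc : Function.Injective c) : Pairwise fun i j => IsUnit (c i - c j) :=
  fun _ _ hij => (sub_ne_zero.2 (hc.ne hij)).isUnit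

theorem Pairwise.isUnit_sub_map {R S ι : Type*} [Ring R] [Ring S] {c : ι → R}
    (hc : Pairwise fun i j => IsUnit (c i - c j)) (f : R →+* S) :
    Pairwise fun i j => IsUnit (f (c i) - f (c j)) :=
  fun _ _ hij => by simpa only [map_sub] using (hc hij).map f

namespace Polynomial

variable {A ι : Type*} [CommRing A] [Fintype ι] {c : ι → A}

theorem prod_X_sub_C_pow_dvd (hc : Pairwise fun i j => IsUnit (c i - c j)) (d : ι → ℕ)
    {p : A[X]} (hdvd : ∀ k, (X - C (c k)) ^ d k ∣ p) : ∏ k, (X - C (c k)) ^ d k ∣ p :=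
  Finset.prod_dvd_of_coprime (fun _ _ _ _ hij => (isCoprime_X_sub_C_of_isUnit_sub (hc hij)).pow)
    fun k _ => hdvd k

theorem natDegree_prod_X_sub_C_pow [Nontrivial A] (c : ι → A) (d : ι → ℕ) :
    (∏ k, (X - C (c k)) ^ d k).natDegree = ∑ k, d k := by
  rw [natDegree_prod_of_monic _ _ fun k _ => (monic_X_sub_C (c k)).pow _]
  simp [(monic_X_sub_C _).natDegree_pow]

theorem eq_zero_of_forall_X_sub_C_pow_dvd (hc : Pairwise fun i j => IsUnit (c i - c j))
    (d : ι → ℕ) {p : A[X]} (hdvd : ∀ k, (X - C (c k)) ^ d k ∣ p)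
    (hdeg : p.natDegree < ∑ k, d k) : p = 0 := by
  nontriviality A
  by_contra hp
  exact (monic_prod_of_monic _ _ fun k _ => (monic_X_sub_C (c k)).pow _).not_dvd_of_natDegree_lt
    hp (by rwa [natDegree_prod_X_sub_C_pow]) (prod_X_sub_C_pow_dvd hc d hdvd)

theorem dvd_coeff_of_forall_mem_span_pair (hc : Pairwise fun i j => IsUnit (c i - c j))
    (d : ι → ℕ) (g : A) {p : A[X]} (hmem : ∀ k, p ∈ Ideal.span {(X - C (c k)) ^ d k, C g})
    (hdeg : p.natDegree < ∑ k, d k) (n : ℕ) : g ∣ p.coeff n := by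
  set mk := Ideal.Quotient.mk (Ideal.span {g})
  have hg : mk g = 0 := Ideal.Quotient.eq_zero_iff_mem.2 (Ideal.mem_span_singleton_self g)
  have hmap : p.map mk = 0 := by
    refine eq_zero_of_forall_X_sub_C_pow_dvd (hc.isUnit_sub_map mk) d (fun k => ?_)
      (natDegree_map_le.trans_lt hdeg)
    obtain ⟨u, v, rfl⟩ := Ideal.mem_span_pair.mp (hmem k)
    exact ⟨u.map mk, by simp [hg, mul_comm]⟩
  rw [← Ideal.mem_span_singleton, ← Ideal.Quotient.eq_zero_iff_mem, ← coeff_map, hmap, coeff_zero]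

end Polynomial

namespace MvPolynomial

theorem finSuccEquiv_C {R : Type*} [CommRing R] {n : ℕ} (r : R) :
    finSuccEquiv R n (C r) = Polynomial.C (C r) :=
  (finSuccEquiv R n).commutes r

theorem eq_zero_of_forall_X_zero_sub_C_pow_dvd {R ι : Type*} [CommRing R] [Fintype ι] {n : ℕ}
    {c : ι → R} (hc : Pairwise fun i j => IsUnit (c i - c j)) (d : ι → ℕ)
    {q : MvPolynomial (Fin (n + 1)) R} (hdvd : ∀ k, (X 0 - C (c k)) ^ d k ∣ q)
    (hdeg : q.degreeOf 0 < ∑ k, d k) : q = 0 := by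
  rw [← EmbeddingLike.map_eq_zero_iff (f := finSuccEquiv R n)]
  refine Polynomial.eq_zero_of_forall_X_sub_C_pow_dvd (hc.isUnit_sub_map C) d (fun k => ?_)
    (by rwa [natDegree_finSuccEquiv])
  simpa [finSuccEquiv_X_zero, finSuccEquiv_C] using map_dvd (finSuccEquiv R n) (hdvd k)

end MvPolynomial

open MvPolynomial

theorem bivariate_hermite_uniqueness_general
    (K : Type*) [Field K]
    (r₁ r₂ : ℕ) (a : Fin r₁ → K) (b : Fin r₂ → K)
    (ha : Function.Injective a) (hb : Function.Injective b)
    (d₁ : Fin r₁ → ℕ) (d₂ : Fin r₂ → ℕ)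
    (R : MvPolynomial (Fin 2) K)
    (hdegx : R.degreeOf 0 < ∑ k, d₁ k)
    (hdegy : R.degreeOf 1 < ∑ k, d₂ k)
    (hmem : ∀ (k₁ : Fin r₁) (k₂ : Fin r₂),
      R ∈ Ideal.span ({(X 0 - C (a k₁)) ^ (d₁ k₁), (X 1 - C (b k₂)) ^ (d₂ k₂)} :
        Set (MvPolynomial (Fin 2) K))) :
    R = 0 := by
  set P := finSuccEquiv K 1 R
  have hP (k₁ : Fin r₁) (k₂ : Fin r₂) : P ∈ Ideal.span
      {(Polynomial.X - Polynomial.C (C (a k₁))) ^ d₁ k₁,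
        Polynomial.C ((X 0 - C (b k₂)) ^ d₂ k₂)} := by
    have := Ideal.mem_map_of_mem (finSuccEquiv K 1) (hmem k₁ k₂)
    rwa [Ideal.map_span, Set.image_pair, map_pow, map_pow, map_sub, map_sub, finSuccEquiv_X_zero,
      ← Fin.succ_zero_eq_one, finSuccEquiv_X_succ, finSuccEquiv_C, finSuccEquiv_C,
      ← Polynomial.C_sub, ← Polynomial.C_pow] at this
  have hcoeff (n : ℕ) : P.coeff n = 0 :=
    eq_zero_of_forall_X_zero_sub_C_pow_dvd hb.pairwise_isUnit_sub d₂
      (fun k₂ => Polynomial.dvd_coeff_of_forall_mem_span_pair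
        (ha.pairwise_isUnit_sub.isUnit_sub_map C) d₁ _ (fun k₁ => hP k₁ k₂)
        (by rwa [natDegree_finSuccEquiv]) n)
      ((degreeOf_coeff_finSuccEquiv R 0 n).trans_lt hdegy)
  exact (EmbeddingLike.map_eq_zero_iff (f := finSuccEquiv K 1)).1 (Polynomial.ext hcoeff)

/-- Bivariate Hermite interpolation uniqueness (key step of Theorem 4(ii)):
a polynomial `R` of small bidegree lying in all primary ideals
`((x - a k₁)^(d₁ k₁), (y - b k₂)^(d₂ k₂))` is zero. -/
theorem bivariate_hermite_uniqueness
    (K : Type*) [Field K] [CharZero K]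
    (r₁ r₂ : ℕ) (a : Fin r₁ → K) (b : Fin r₂ → K)
    (ha : Function.Injective a) (hb : Function.Injective b)
    (d₁ : Fin r₁ → ℕ) (d₂ : Fin r₂ → ℕ)
    (hd₁ : ∀ k, 1 ≤ d₁ k) (hd₂ : ∀ k, 1 ≤ d₂ k)
    (R : MvPolynomial (Fin 2) K)
    (hdegx : R.degreeOf 0 < ∑ k, d₁ k)
    (hdegy : R.degreeOf 1 < ∑ k, d₂ k)
    (hmem : ∀ (k₁ : Fin r₁) (k₂ : Fin r₂),
      R ∈ Ideal.span ({(X 0 - C (a k₁)) ^ (d₁ k₁), (X 1 - C (b k₂)) ^ (d₂ k₂)} :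
        Set (MvPolynomial (Fin 2) K))) :
    R = 0 :=
  bivariate_hermite_uniqueness_general K r₁ r₂ a b ha hb d₁ d₂ R hdegx hdegy hmem
end

section
/- Let K be a field, s ≥ 1, c : Fin s → K, and d : Fin s → ℕ with d i ≥ 1 for all i. Work in K[x₁,…,x_s] (MvPolynomial (Fin s) K). Suppose f belongs to the ideal generated by the polynomials (x_i − c_i)^{d_i} for 1 ≤ i ≤ s, and suppose that deg_{x_i} f < d_i for every i. Then f = 0. -/
/-!
The translation `x_i ↦ x_i + c_i` is an automorphism of `K[x_1, …, x_s]` that does not raise the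
degree in any single variable and carries `(x_i - c_i)^(d_i)` to `x_i^(d_i)`. So it suffices to
treat the monomial ideal `(x_1^(d_1), …, x_s^(d_s))`, where membership means that every monomial
of `f` is divisible by some `x_i^(d_i)`; that is impossible when `deg_{x_i} f < d_i` for all `i`,
unless `f` has no monomials at all.
-/

open MvPolynomial

namespace MvPolynomial

variable {σ R : Type*}

section CommSemiring

variable [CommSemiring R]

theorem degreeOf_aeval_le_of_degreeOf_le (j : σ) {g : σ → MvPolynomial σ R}
    (hg_ne : ∀ i ≠ j, degreeOf j (g i) = 0) (hg_self : degreeOf j (g j) ≤ 1)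
    (f : MvPolynomial σ R) : degreeOf j (aeval g f) ≤ degreeOf j f := by
  conv_lhs => rw [f.as_sum, map_sum]
  refine (degreeOf_sum_le _ _ _).trans (Finset.sup_le fun m hm => ?_)
  rw [aeval_monomial, algebraMap_eq]
  refine (degreeOf_C_mul_le _ _ _).trans ((degreeOf_prod_le _ _ _).trans ?_)
  calc ∑ i ∈ m.support, degreeOf j (g i ^ m i)
      ≤ ∑ i ∈ m.support, m i * degreeOf j (g i) :=
        Finset.sum_le_sum fun i _ => degreeOf_pow_le _ _ _
    _ ≤ m j * degreeOf j (g j) := by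
        rw [Finset.sum_eq_single j (fun i _ hi => by rw [hg_ne i hi, mul_zero])
          (fun hj => by rw [Finsupp.notMem_support_iff.mp hj, zero_mul])]
    _ ≤ m j := mul_le_of_le_one_right (Nat.zero_le _) hg_self
    _ ≤ degreeOf j f := monomial_le_degreeOf j hm

theorem eq_zero_of_mem_span_X_pow_of_degreeOf_lt {d : σ → ℕ} {f : MvPolynomial σ R}
    (hf : f ∈ Ideal.span (Set.range fun i => X i ^ d i))
    (hdeg : ∀ i, degreeOf i f < d i) : f = 0 := by
  have hmon : (Set.range fun i => X i ^ d i) =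
      (fun m => monomial m (1 : R)) '' Set.range fun i => Finsupp.single i (d i) := by
    rw [← Set.range_comp]
    simp [Function.comp_def, X_pow_eq_monomial]
  rw [hmon, mem_ideal_span_monomial_image] at hf
  by_contra hf0
  obtain ⟨m, hm⟩ := support_nonempty.mpr hf0
  obtain ⟨_, ⟨i, rfl⟩, hle⟩ := hf m hm
  have hdi : d i ≤ m i := by simpa using hle i
  exact (hdeg i).not_ge (hdi.trans (monomial_le_degreeOf i hm))

end CommSemiring

section CommRing

variable [CommRing R] (c : σ → R)

theorem degreeOf_aeval_X_add_C_le (f : MvPolynomial σ R) (j : σ) :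
    degreeOf j (aeval (fun i => X i + C (c i)) f) ≤ degreeOf j f := by
  have hX_add_C : ∀ i, degreeOf j (X i + C (c i)) ≤ degreeOf j (X i : MvPolynomial σ R) :=
    fun i => by simpa [degreeOf_C] using degreeOf_add_le j (X i) (C (c i))
  refine degreeOf_aeval_le_of_degreeOf_le j (fun i hi => ?_) ?_ f
  · exact Nat.le_zero.mp ((hX_add_C i).trans (degreeOf_X_of_ne hi.symm).le)
  · exact (hX_add_C j).trans (by simpa using degreeOf_mul_X_self j (1 : MvPolynomial σ R))

theorem aeval_X_sub_C_comp_aeval_X_add_C :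
    (aeval fun i => X i - C (c i)).comp (aeval fun i => X i + C (c i)) =
      AlgHom.id R (MvPolynomial σ R) :=
  algHom_ext fun i => by simp

theorem aeval_X_add_C_injective :
    Function.Injective (aeval (R := R) fun i => X i + C (c i)) :=
  Function.LeftInverse.injective (g := aeval fun i => X i - C (c i))
    fun f => by rw [← AlgHom.comp_apply, aeval_X_sub_C_comp_aeval_X_add_C, AlgHom.id_apply]

theorem map_span_X_sub_C_pow (d : σ → ℕ) :
    (Ideal.span (Set.range fun i => (X i - C (c i)) ^ d i)).map
        (aeval (R := R) fun i => X i + C (c i)) =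
      Ideal.span (Set.range fun i => X i ^ d i) := by
  rw [Ideal.map_span, ← Set.range_comp]
  simp [Function.comp_def]

end CommRing

end MvPolynomial

theorem eq_zero_of_mem_ideal_of_degreeOf_lt_general
    (K : Type*) [Field K]
    (s : ℕ) (c : Fin s → K) (d : Fin s → ℕ)
    (f : MvPolynomial (Fin s) K)
    (hf : f ∈ Ideal.span (Set.range fun i : Fin s => (X i - C (c i)) ^ (d i)))
    (hdeg : ∀ i : Fin s, f.degreeOf i < d i) :
    f = 0 := by
  have hshift : aeval (fun i => X i + C (c i)) f ∈ Ideal.span (Set.range fun i => X i ^ d i) :=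
    map_span_X_sub_C_pow c d ▸ Ideal.mem_map_of_mem _ hf
  have hshift_eq_zero := eq_zero_of_mem_span_X_pow_of_degreeOf_lt hshift fun i =>
    (degreeOf_aeval_X_add_C_le c f i).trans_lt (hdeg i)
  exact aeval_X_add_C_injective c (hshift_eq_zero.trans (map_zero _).symm)

/-- Algebraic content of the final claim of Lemma 3(ii)(c): a polynomial in the
ideal generated by the `(x_i - c_i)^(d_i)` whose degree in each `x_i` is `< d_i`
must vanish. -/
theorem eq_zero_of_mem_ideal_of_degreeOf_lt
    (K : Type*) [Field K]
    (s : ℕ) (hs : 1 ≤ s) (c : Fin s → K) (d : Fin s → ℕ) (hd : ∀ i, 1 ≤ d i)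
    (f : MvPolynomial (Fin s) K)
    (hf : f ∈ Ideal.span (Set.range fun i : Fin s => (X i - C (c i)) ^ (d i)))
    (hdeg : ∀ i : Fin s, f.degreeOf i < d i) :
    f = 0 :=
  eq_zero_of_mem_ideal_of_degreeOf_lt_general K s c d f hf hdeg
end

section
/- Let K be a field, a₁, …, a_{r₁} ∈ K pairwise distinct and b₁, …, b_{r₂} ∈ K pairwise distinct. In K[x,y] (MvPolynomial (Fin 2) K), set Q₁ := ∏_{j=1}^{r₁} (x − a_j) and Q₂ := ∏_{k=1}^{r₂} (y − b_k). Then the ideal generated by Q₁ and Q₂ equals the intersection ⋂_{j=1}^{r₁} ⋂_{k=1}^{r₂} (x − a_j, y − b_k) of the maximal ideals generated by x − a_j and y − b_k; in particular, the ideal (Q₁, Q₂) is a radical ideal. -/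
open MvPolynomial Function

/-! Since the ideals `(x - a_j)` are pairwise comaximal, so are their images modulo `(Q₂)`, and
the Chinese remainder theorem there gives `(Q₁) + (Q₂) = ⋂_j ((x - a_j) + (Q₂))`; the same
argument in `y` splits each term into `⋂_k (x - a_j, y - b_k)`. Each `(x - a_j, y - b_k)` is the
kernel of evaluation at `(a_j, b_k)`, hence prime, and an intersection of primes is radical. -/

namespace Ideal

variable {R : Type*} [CommRing R]

theorem iInf_sup_eq_prod_sup {ι : Type*} [Fintype ι] {I : ι → Ideal R}
    (hI : Pairwise (IsCoprime on I)) (G : Ideal R) :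
    ⨅ i, (I i ⊔ G) = (∏ i, I i) ⊔ G := by
  set π := Quotient.mk G
  have comap_map_π (J : Ideal R) : (J.map π).comap π = J ⊔ G := by
    rw [comap_map_of_surjective' π Quotient.mk_surjective, mk_ker]
  have hcop : ((Finset.univ : Finset ι) : Set ι).Pairwise (IsCoprime on fun i => (I i).map π) :=
    fun i _ j _ hij => isCoprime_iff_sup_eq.2 (by rw [← map_sup, (hI hij).sup_eq, map_top])
  calc ⨅ i, (I i ⊔ G) = (⨅ i, (I i).map π).comap π := by
        simp only [comap_iInf, comap_map_π]
    _ = (∏ i, (I i).map π).comap π := by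
      rw [prod_eq_iInf_of_pairwise_isCoprime hcop]; simp
    _ = (∏ i, I i) ⊔ G := by rw [← comap_map_π, ← mapHom_apply, map_prod]; rfl

end Ideal

namespace MvPolynomial

variable {σ R : Type*} [CommRing R]

theorem isCoprime_X_sub_C_of_isUnit_sub (i : σ) {c d : R} (h : IsUnit (c - d)) :
    IsCoprime (X i - C c : MvPolynomial σ R) (X i - C d) := by
  simpa using (Polynomial.isCoprime_X_sub_C_of_isUnit_sub h).map
    (Polynomial.aeval (X i : MvPolynomial σ R)).toRingHom

theorem sub_C_eval_mem_span_X_sub_C (v : σ → R) (f : MvPolynomial σ R) :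
    f - C (eval v f) ∈ Ideal.span (Set.range fun i => X i - C (v i)) := by
  induction f using MvPolynomial.induction_on with
  | C a => simp
  | add p q hp hq =>
    rw [map_add, map_add, add_sub_add_comm]
    exact add_mem hp hq
  | mul_X p i hp =>
    have : p * X i - C (eval v (p * X i)) =
        p * (X i - C (v i)) + C (v i) * (p - C (eval v p)) := by
      simp only [map_mul, eval_X]; ring
    rw [this]
    exact add_mem (Ideal.mul_mem_left _ _ (Ideal.subset_span ⟨i, rfl⟩))
      (Ideal.mul_mem_left _ _ hp)

theorem ker_eval_eq_span_X_sub_C (v : σ → R) :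
    RingHom.ker (eval v) = Ideal.span (Set.range fun i => X i - C (v i)) := by
  refine le_antisymm (fun f hf => ?_) (Ideal.span_le.2 ?_)
  · simpa [RingHom.mem_ker.1 hf] using sub_C_eval_mem_span_X_sub_C v f
  · rintro _ ⟨i, rfl⟩
    simp [RingHom.mem_ker]

theorem isPrime_span_X_sub_C [IsDomain R] (v : σ → R) :
    (Ideal.span (Set.range fun i => X i - C (v i))).IsPrime := by
  rw [← ker_eval_eq_span_X_sub_C]
  exact RingHom.ker_isPrime _

theorem isPrime_span_pair_X_sub_C [IsDomain R] (a b : R) :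
    (Ideal.span {X 0 - C a, X 1 - C b} : Ideal (MvPolynomial (Fin 2) R)).IsPrime := by
  convert isPrime_span_X_sub_C ![a, b]
  ext f
  simp [Fin.exists_fin_two, eq_comm]

theorem span_prod_X_sub_C_sup_eq_iInf {ι : Type*} [Fintype ι] (i : σ) {a : ι → R}
    (ha : Pairwise fun j k => IsUnit (a j - a k)) (G : Ideal (MvPolynomial σ R)) :
    Ideal.span {∏ j, (X i - C (a j))} ⊔ G = ⨅ j, (Ideal.span {X i - C (a j)} ⊔ G) := by
  rw [← Ideal.prod_span_singleton, Ideal.iInf_sup_eq_prod_sup]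
  exact fun j k hjk =>
    (Ideal.isCoprime_span_singleton_iff _ _).2 (isCoprime_X_sub_C_of_isUnit_sub i (ha hjk))

end MvPolynomial

/-- Lemma 2(ii), equation (1): the ideal generated by the two squarefree products
`Q₁ = ∏ (x - a_j)` and `Q₂ = ∏ (y - b_k)` equals the intersection of the maximal
ideals `(x - a_j, y - b_k)`; in particular it is radical. -/
theorem span_products_eq_inf_and_isRadical
    (K : Type*) [Field K]
    (r₁ r₂ : ℕ) (a : Fin r₁ → K) (b : Fin r₂ → K)
    (ha : Function.Injective a) (hb : Function.Injective b) :
    Ideal.span ({∏ j, (X 0 - C (a j)), ∏ k, (X 1 - C (b k))} :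
        Set (MvPolynomial (Fin 2) K)) =
      ⨅ (j : Fin r₁), ⨅ (k : Fin r₂),
        Ideal.span ({X 0 - C (a j), X 1 - C (b k)} : Set (MvPolynomial (Fin 2) K)) ∧
    (Ideal.span ({∏ j, (X 0 - C (a j)), ∏ k, (X 1 - C (b k))} :
        Set (MvPolynomial (Fin 2) K))).IsRadical := by
  have ha' : Pairwise fun j k => IsUnit (a j - a k) := fun j k hjk =>
    (sub_ne_zero.2 (ha.ne hjk)).isUnit
  have hb' : Pairwise fun j k => IsUnit (b j - b k) := fun j k hjk =>
    (sub_ne_zero.2 (hb.ne hjk)).isUnit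
  have hspan := calc
    (Ideal.span {∏ j, (X 0 - C (a j)), ∏ k, (X 1 - C (b k))} : Ideal (MvPolynomial (Fin 2) K))
        = ⨅ j, (Ideal.span {X 0 - C (a j)} ⊔ Ideal.span {∏ k, (X 1 - C (b k))}) := by
          rw [Ideal.span_insert, span_prod_X_sub_C_sup_eq_iInf 0 ha']
      _ = ⨅ j, ⨅ k, Ideal.span {X 0 - C (a j), X 1 - C (b k)} := by
          refine iInf_congr fun j => ?_
          rw [sup_comm, span_prod_X_sub_C_sup_eq_iInf 1 hb']
          exact iInf_congr fun k => by rw [sup_comm, Ideal.span_insert]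
  exact ⟨hspan, hspan ▸ Ideal.isRadical_iInf _ fun j => Ideal.isRadical_iInf _ fun k =>
    (isPrime_span_pair_X_sub_C (a j) (b k)).isRadical⟩
end

section
/- Let K be a field of characteristic zero, a₁, …, a_{r₁} ∈ K pairwise distinct and b₁, …, b_{r₂} ∈ K pairwise distinct. In K[x,y] (MvPolynomial (Fin 2) K), set Q₁ := ∏_{j=1}^{r₁} (x − a_j), Q₂ := ∏_{k=1}^{r₂} (y − b_k), and let S := (∂_x Q₁)·(∂_y Q₂) be the product of the separants. Then the ideal (Q₁, Q₂) is saturated with respect to S: for every f ∈ K[x,y] and every n ∈ ℕ, if S^n · f belongs to the ideal generated by Q₁ and Q₂, then f itself belongs to that ideal. Equivalently, (Q₁, Q₂) : S^∞ = (Q₁, Q₂). -/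
/-!
The separant is invertible modulo `(Q₁, Q₂)`: a Bézout identity `u Q + v Q' = 1` for a separable
`Q` shows that `v` inverts `Q'` modulo `Q`. So `S` is a unit in the quotient ring and can be
cancelled from `S ^ n * f ≡ 0`.
-/

open MvPolynomial

theorem Polynomial.Separable.isUnit_mk_aeval_derivative {R A : Type*} [CommRing R] [CommRing A]
    [Algebra R A] {p : Polynomial R} (hp : p.Separable) {I : Ideal A} {x : A}
    (hx : Polynomial.aeval x p ∈ I) :
    IsUnit (Ideal.Quotient.mk I (Polynomial.aeval x (Polynomial.derivative p))) := by
  have : IsCoprime (Ideal.Quotient.mk I (Polynomial.aeval x p))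
      (Ideal.Quotient.mk I (Polynomial.aeval x (Polynomial.derivative p))) :=
    IsCoprime.map hp ((Ideal.Quotient.mk I).comp (Polynomial.aeval x).toRingHom)
  rwa [Ideal.Quotient.eq_zero_iff_mem.2 hx, isCoprime_zero_left] at this

theorem Ideal.mem_of_isUnit_mk_of_mul_mem {R : Type*} [CommRing R] {I : Ideal R} {s f : R}
    (hs : IsUnit (Ideal.Quotient.mk I s)) (h : s * f ∈ I) : f ∈ I := by
  rw [← Ideal.Quotient.eq_zero_iff_mem] at h ⊢
  rwa [map_mul, hs.mul_right_eq_zero] at h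

theorem MvPolynomial.pderiv_aeval_X {R σ : Type*} [CommSemiring R] (i : σ) (p : Polynomial R) :
    pderiv i (Polynomial.aeval (X i : MvPolynomial σ R) p) =
      Polynomial.aeval (X i) (Polynomial.derivative p) := by
  simp [Derivation.map_aeval]

theorem MvPolynomial.isUnit_mk_pderiv_prod_X_sub_C {K σ ι : Type*} [Field K] [Fintype ι]
    (i : σ) {a : ι → K} (ha : Function.Injective a) {I : Ideal (MvPolynomial σ K)}
    (hI : ∏ j, (X i - C (a j)) ∈ I) :
    IsUnit (Ideal.Quotient.mk I (pderiv i (∏ j, (X i - C (a j))))) := by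
  have hQ : Polynomial.aeval (X i : MvPolynomial σ K)
      (∏ j, (Polynomial.X - Polynomial.C (a j))) = ∏ j, (X i - C (a j)) := by
    simp [algebraMap_eq]
  rw [← hQ, pderiv_aeval_X]
  exact (Polynomial.separable_prod_X_sub_C_iff.2 ha).isUnit_mk_aeval_derivative (hQ ▸ hI)

theorem span_products_saturated_wrt_separant_general
    (K : Type*) [Field K]
    (r₁ r₂ : ℕ) (a : Fin r₁ → K) (b : Fin r₂ → K)
    (ha : Function.Injective a) (hb : Function.Injective b)
    (f : MvPolynomial (Fin 2) K) (n : ℕ)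
    (hf : (pderiv (0 : Fin 2) (∏ j, (X 0 - C (a j))) *
            pderiv (1 : Fin 2) (∏ k, (X 1 - C (b k)))) ^ n * f ∈
          Ideal.span ({∏ j, (X 0 - C (a j)), ∏ k, (X 1 - C (b k))} :
            Set (MvPolynomial (Fin 2) K))) :
    f ∈ Ideal.span ({∏ j, (X 0 - C (a j)), ∏ k, (X 1 - C (b k))} :
          Set (MvPolynomial (Fin 2) K)) := by
  refine Ideal.mem_of_isUnit_mk_of_mul_mem ?_ hf
  rw [map_pow, map_mul]
  exact ((isUnit_mk_pderiv_prod_X_sub_C 0 ha (Ideal.subset_span (by simp))).mul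
    (isUnit_mk_pderiv_prod_X_sub_C 1 hb (Ideal.subset_span (by simp)))).pow n

/-- Saturation claim `(Q) : S_Q^∞ = (Q)` from the proof of Lemma 2(ii):
the ideal `(Q₁, Q₂)` of the squarefree products is saturated with respect to
the product of the separants `S = (∂_x Q₁)(∂_y Q₂)`. -/
theorem span_products_saturated_wrt_separant
    (K : Type*) [Field K] [CharZero K]
    (r₁ r₂ : ℕ) (a : Fin r₁ → K) (b : Fin r₂ → K)
    (ha : Function.Injective a) (hb : Function.Injective b)
    (f : MvPolynomial (Fin 2) K) (n : ℕ)
    (hf : (pderiv (0 : Fin 2) (∏ j, (X 0 - C (a j))) *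
            pderiv (1 : Fin 2) (∏ k, (X 1 - C (b k)))) ^ n * f ∈
          Ideal.span ({∏ j, (X 0 - C (a j)), ∏ k, (X 1 - C (b k))} :
            Set (MvPolynomial (Fin 2) K))) :
    f ∈ Ideal.span ({∏ j, (X 0 - C (a j)), ∏ k, (X 1 - C (b k))} :
          Set (MvPolynomial (Fin 2) K)) :=
  span_products_saturated_wrt_separant_general K r₁ r₂ a b ha hb f n hf
end
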